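/- For every natural number n, C_{n+1} = Σ_{k=0}^{n} C(n, k) · M_k, where C_{n+1} is the (n+1)-st Catalan number and M_k is the k-th Motzkin number. -/
import Mathlib

open Finset

def motzkin : ℕ → ℕ
  | 0 => 1
  | n + 1 => motzkin n + ∑ i ∈ (Finset.range n).attach, motzkin i.1 * motzkin (n - 1 - i.1)
  termination_by n => n
  decreasing_by
  · exact Nat.lt_succ_self n
  · have := Finset.mem_range.mp i.2; omega
  · omega

lemma motzkin_succ (n : ℕ) :
    motzkin (n + 1) = motzkin n + ∑ i ∈ Finset.range n, motzkin i * motzkin (n - 1 - i) := by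
  rw [motzkin]
  congr 1
  exact Finset.sum_attach (Finset.range n) (fun i => motzkin i * motzkin (n - 1 - i))

lemma pascal (n k : ℕ) : (n + 1).choose (k + 1) = n.choose k + n.choose (k + 1) :=
  Nat.choose_succ_succ n k

lemma vander (m : ℕ) : ∀ j i : ℕ,
    ∑ a ∈ range (m + 1), a.choose i * (m - a).choose j = (m + 1).choose (i + j + 1) := by
  induction m with
  | zero =>
    intro j i
    simp only [range_one, sum_singleton, Nat.zero_sub]
    cases i <;> cases j <;> simp [Nat.choose]
  | succ m ih =>
    intro j i
    rw [sum_range_succ, Nat.sub_self]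
    cases j with
    | zero =>
      have h := ih 0 i
      simp only [Nat.choose_zero_right, mul_one, Nat.add_zero] at h ⊢
      rw [h, pascal (m + 1) i]
      omega
    | succ j =>
      have key : ∑ a ∈ range (m + 1), a.choose i * (m + 1 - a).choose (j + 1)
          = ∑ a ∈ range (m + 1),
              (a.choose i * (m - a).choose j + a.choose i * (m - a).choose (j + 1)) := by
        apply Finset.sum_congr rfl
        intro a ha
        have hle : m + 1 - a = (m - a) + 1 := by
          have := mem_range.mp ha; omega
        rw [hle, Nat.choose_succ_succ, Nat.mul_add]
      rw [key, Finset.sum_add_distrib, ih j i, ih (j + 1) i]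
      have e : i + (j + 1) + 1 = (i + j + 1) + 1 := by omega
      rw [e, pascal (m + 1) (i + j + 1)]
      simp [Nat.choose]

def binT (n : ℕ) : ℕ := ∑ k ∈ Finset.range (n + 1), n.choose k * motzkin k

lemma binT_succ (m : ℕ) : binT (m + 1) =
    2 * binT m + ∑ k ∈ range (m + 1), m.choose k *
      ∑ i ∈ range k, motzkin i * motzkin (k - 1 - i) := by
  have h0 : binT (m + 1) = ∑ k ∈ range (m + 1), (m + 1).choose (k + 1) * motzkin (k + 1) + 1 := by
    rw [binT, Finset.sum_range_succ']
    simp [motzkin]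
  have hsummand : ∀ k ∈ range (m + 1), (m + 1).choose (k + 1) * motzkin (k + 1)
      = m.choose k * motzkin k
        + m.choose k * ∑ i ∈ range k, motzkin i * motzkin (k - 1 - i)
        + m.choose (k + 1) * motzkin (k + 1) := by
    intro k _
    rw [Nat.choose_succ_succ, Nat.add_mul]
    rw [motzkin_succ k, Nat.mul_add]
  rw [Finset.sum_congr rfl hsummand] at h0
  rw [Finset.sum_add_distrib, Finset.sum_add_distrib] at h0
  have h3 : ∑ k ∈ range (m + 1), m.choose (k + 1) * motzkin (k + 1) + 1 = binT m := by
    rw [sum_range_succ, Nat.choose_succ_self, binT, Finset.sum_range_succ']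
    simp [motzkin]
  have hb : ∑ k ∈ range (m + 1), m.choose k * motzkin k = binT m := rfl
  omega

lemma triangle (n : ℕ) (g : ℕ → ℕ → ℕ) :
    ∑ i ∈ range n, ∑ j ∈ range (n - i), g i j
      = ∑ k ∈ range n, ∑ i ∈ range (k + 1), g i (k - i) := by
  rw [Finset.sum_sigma' (range n) (fun i => range (n - i)) (fun i j => g i j),
    Finset.sum_sigma' (range n) (fun k => range (k + 1)) (fun k i => g i (k - i))]
  apply Finset.sum_nbij' (fun p => (⟨p.1 + p.2, p.1⟩ : Σ _ : ℕ, ℕ))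
    (fun p => (⟨p.2, p.1 - p.2⟩ : Σ _ : ℕ, ℕ))
  · rintro ⟨a, b⟩ h
    simp only [mem_sigma, mem_range] at h ⊢
    omega
  · rintro ⟨a, b⟩ h
    simp only [mem_sigma, mem_range] at h ⊢
    omega
  · rintro ⟨a, b⟩ h
    have : a + b - a = b := by omega
    simp [this]
  · rintro ⟨a, b⟩ h
    simp only [mem_sigma, mem_range] at h
    have : b + (a - b) = a := by omega
    simp [this]
  · rintro ⟨a, b⟩ h
    have : a + b - a = b := by omega
    simp [this]

lemma key (m : ℕ) : ∑ i ∈ range m, binT i * binT (m - 1 - i)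
    = ∑ k ∈ range (m + 1), m.choose k * ∑ i ∈ range k, motzkin i * motzkin (k - 1 - i) := by
  cases m with
  | zero => simp
  | succ s =>
    have expand : ∀ a ∈ range (s + 1), binT a * binT (s + 1 - 1 - a)
        = ∑ i ∈ range (s + 1), ∑ j ∈ range (s + 1),
            a.choose i * motzkin i * ((s - a).choose j * motzkin j) := by
      intro a ha
      have ha' : a ≤ s := by have := mem_range.mp ha; omega
      have h1 : binT a = ∑ i ∈ range (s + 1), a.choose i * motzkin i := by
        rw [binT]
        apply Finset.sum_subset
        · exact Finset.range_subset_range.mpr (by omega)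
        · intro x _ hx2
          have : a < x := by have := Finset.mem_range.not.mp hx2; omega
          rw [Nat.choose_eq_zero_of_lt this, Nat.zero_mul]
      have h2 : binT (s + 1 - 1 - a) = ∑ j ∈ range (s + 1), (s - a).choose j * motzkin j := by
        have e : s + 1 - 1 - a = s - a := by omega
        rw [e, binT]
        apply Finset.sum_subset
        · exact Finset.range_subset_range.mpr (by omega)
        · intro x _ hx2
          have : s - a < x := by have := Finset.mem_range.not.mp hx2; omega
          rw [Nat.choose_eq_zero_of_lt this, Nat.zero_mul]
      rw [h1, h2, Finset.sum_mul_sum]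
    rw [Finset.sum_congr rfl expand]
    rw [Finset.sum_comm]
    have swap2 : ∀ i ∈ range (s + 1),
        ∑ a ∈ range (s + 1), ∑ j ∈ range (s + 1),
            a.choose i * motzkin i * ((s - a).choose j * motzkin j)
        = ∑ j ∈ range (s + 1), motzkin i * motzkin j * (s + 1).choose (i + j + 1) := by
      intro i _
      rw [Finset.sum_comm]
      apply Finset.sum_congr rfl
      intro j _
      have : ∀ a, a.choose i * motzkin i * ((s - a).choose j * motzkin j)
          = motzkin i * motzkin j * (a.choose i * (s - a).choose j) := by intro a; ring
      simp only [this]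
      rw [← Finset.mul_sum, vander s j i]
    rw [Finset.sum_congr rfl swap2]
    -- shrink inner range
    have shrink : ∀ i ∈ range (s + 1),
        ∑ j ∈ range (s + 1), motzkin i * motzkin j * (s + 1).choose (i + j + 1)
        = ∑ j ∈ range (s + 1 - i), motzkin i * motzkin j * (s + 1).choose (i + j + 1) := by
      intro i hi
      have hi' : i ≤ s := by have := mem_range.mp hi; omega
      symm
      apply Finset.sum_subset
      · exact Finset.range_subset_range.mpr (by omega)
      · intro x _ hx2
        have : s + 1 - i ≤ x := by have := Finset.mem_range.not.mp hx2; omega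
        rw [Nat.choose_eq_zero_of_lt (by omega), Nat.mul_zero]
    rw [Finset.sum_congr rfl shrink,
      triangle (s + 1) (fun i j => motzkin i * motzkin j * (s + 1).choose (i + j + 1))]
    -- now handle RHS
    conv_rhs => rw [Finset.sum_range_succ']
    simp only [Nat.choose_zero_right, Finset.range_zero, Finset.sum_empty, Nat.mul_zero,
      Nat.add_zero]
    apply Finset.sum_congr rfl
    intro k _
    rw [Finset.mul_sum]
    apply Finset.sum_congr rfl
    intro i hi
    have hik : i ≤ k := by have := mem_range.mp hi; omega
    have e1 : k + 1 - 1 - i = k - i := by omega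
    have e2 : i + (k - i) + 1 = k + 1 := by omega
    rw [e1, e2]
    ring

lemma catalan_succ_succ (m : ℕ) : catalan (m + 2) =
    2 * catalan (m + 1) + ∑ i ∈ range m, catalan (i + 1) * catalan (m - 1 - i + 1) := by
  have h0 : catalan (m + 2) = ∑ i ∈ range (m + 2), catalan i * catalan (m + 1 - i) := by
    rw [catalan_succ]
    exact (Fin.sum_univ_eq_sum_range (fun i => catalan i * catalan (m + 1 - i)) (m + 2))
  rw [h0, Finset.sum_range_succ', Finset.sum_range_succ]
  have hcong : ∀ i ∈ range m, catalan (i + 1) * catalan (m + 1 - (i + 1))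
      = catalan (i + 1) * catalan (m - 1 - i + 1) := by
    intro i hi
    have : m + 1 - (i + 1) = m - 1 - i + 1 := by have := mem_range.mp hi; omega
    rw [this]
  rw [Finset.sum_congr rfl hcong]
  simp [catalan_zero]
  ring

theorem catalan_eq_binomial_transform_motzkin (n : ℕ) :
    catalan (n + 1) = ∑ k ∈ Finset.range (n + 1), n.choose k * motzkin k := by
  induction n using Nat.strong_induction_on with
  | _ n ih =>
    cases n with
    | zero => simp [catalan_one, motzkin]
    | succ m =>
      have hB : (∑ k ∈ Finset.range (m + 1 + 1), (m + 1).choose k * motzkin k) = binT (m + 1) :=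
        rfl
      rw [hB, binT_succ m, ← key m]
      rw [show m + 1 + 1 = m + 2 from rfl, catalan_succ_succ m]
      have h1 : catalan (m + 1) = binT m := ih m (Nat.lt_succ_self m)
      have h2 : ∀ i ∈ range m, catalan (i + 1) * catalan (m - 1 - i + 1)
          = binT i * binT (m - 1 - i) := by
        intro i hi
        have him := mem_range.mp hi
        rw [ih i (by omega), ih (m - 1 - i) (by omega)]
        rfl
      rw [Finset.sum_congr rfl h2, h1]
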